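/- In the modified AKV model, Z maps Im|Z| ∩ {ψ, Z*ψ'}^⊥ into ran P_3 ∩ {ψ', Zψ}^⊥, Z* maps ran P_3 ∩ {ψ', Zψ}^⊥ into Im|Z| ∩ {ψ, Z*ψ'}^⊥, these two restrictions are mutually inverse and preserve inner products (hence are unitaries between the two subspaces); consequently dim(Im|Z| ∩ {ψ, Z*ψ'}^⊥) = dim(ran P_3 ∩ {ψ', Zψ}^⊥). -/

import Mathlib

noncomputable section

open ContinuousLinearMap Finset
open scoped InnerProductSpace

/-- The Hilbert space ℂ^(N+M+1) of the modified AKV model. -/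
abbrev AKVSpace (N M : ℕ) := EuclideanSpace ℂ (Fin (N + M + 1))

namespace AKV

variable (N M : ℕ)

/-- standard basis vector -/
def ket (i : Fin (N + M + 1)) : AKVSpace N M := EuclideanSpace.single i 1

/-- rank-one operator |u⟩⟨v| : x ↦ ⟪v, x⟫ • u -/
def ketbra (u v : AKVSpace N M) : AKVSpace N M →L[ℂ] AKVSpace N M :=
  (innerSL ℂ v).smulRight u

/-- indices 2,…,N of the second level -/
def idx2 : Finset (Fin (N + M + 1)) := univ.filter fun i => 2 ≤ (i : ℕ) ∧ (i : ℕ) ≤ N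
/-- indices N+1,…,N+M of the third level -/
def idx3 : Finset (Fin (N + M + 1)) := univ.filter fun i => N + 1 ≤ (i : ℕ)

/-- orthogonal projection onto span{e_0} -/
def P0 : AKVSpace N M →L[ℂ] AKVSpace N M := ketbra N M (ket N M 0) (ket N M 0)
/-- orthogonal projection onto span{e_1} -/
def P1 : AKVSpace N M →L[ℂ] AKVSpace N M := ketbra N M (ket N M 1) (ket N M 1)
/-- orthogonal projection onto span{e_2,…,e_N} -/
def P2 : AKVSpace N M →L[ℂ] AKVSpace N M := ∑ i ∈ idx2 N M, ketbra N M (ket N M i) (ket N M i)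
/-- orthogonal projection onto span{e_{N+1},…,e_{N+M}} -/
def P3 : AKVSpace N M →L[ℂ] AKVSpace N M := ∑ i ∈ idx3 N M, ketbra N M (ket N M i) (ket N M i)

/-- ψ = e_2 + ⋯ + e_N -/
def psi : AKVSpace N M := ∑ i ∈ idx2 N M, ket N M i
/-- ψ' = e_{N+1} + ⋯ + e_{N+M} -/
def psi' : AKVSpace N M := ∑ i ∈ idx3 N M, ket N M i

/-- |Z| = Z⋆Z -/
def absZ (Z : AKVSpace N M →L[ℂ] AKVSpace N M) : AKVSpace N M →L[ℂ] AKVSpace N M :=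
  adjoint Z * Z

/-- hypotheses on the interference operator Z of the modified AKV model -/
def IsAKVZ (hM : 1 ≤ M) (Z : AKVSpace N M →L[ℂ] AKVSpace N M) : Prop :=
  Z = P3 N M * Z * P2 N M ∧
  Z * adjoint Z = P3 N M ∧
  Z (ket N M ⟨N - 1, by omega⟩) = ((Real.sqrt ((N : ℝ) - 1))⁻¹ : ℂ) • psi' N M ∧
  adjoint Z (ket N M ⟨N + 1, by omega⟩) = ((Real.sqrt ((N : ℝ) - 1))⁻¹ : ℂ) • psi N M

/-- the five Kraus operators -/
def kraus (Γ1m Γ1p Γ2m Γ2p Γ3m : ℝ) (Z : AKVSpace N M →L[ℂ] AKVSpace N M) :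
    Fin 5 → AKVSpace N M →L[ℂ] AKVSpace N M :=
  ![((Real.sqrt (2 * Γ1m) : ℝ) : ℂ) • ketbra N M (psi N M) (ket N M 1),
    ((Real.sqrt (2 * ((N : ℝ) - 1) * Γ2m) : ℝ) : ℂ) • Z,
    ((Real.sqrt (2 * Γ3m) : ℝ) : ℂ) • ketbra N M (ket N M 0) (psi' N M),
    ((Real.sqrt (2 * Γ1p) : ℝ) : ℂ) • ketbra N M (ket N M 1) (psi N M),
    ((Real.sqrt (2 * ((N : ℝ) - 1) * Γ2p) : ℝ) : ℂ) • adjoint Z]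

/-- the effective Hamiltonian -/
def Heff (γ1m γ1p γ2m γ2p γ3m : ℝ) (Z : AKVSpace N M →L[ℂ] AKVSpace N M) :
    AKVSpace N M →L[ℂ] AKVSpace N M :=
  (γ1p : ℂ) • ketbra N M (psi N M) (psi N M)
    - (((N : ℂ) - 1) * (γ1m : ℂ)) • ketbra N M (ket N M 1) (ket N M 1)
    + (((N : ℂ) - 1) * (γ2p : ℂ)) • P3 N M
    - (((N : ℂ) - 1) * (γ2m : ℂ)) • absZ N M Z
    - (γ3m : ℂ) • ketbra N M (psi' N M) (psi' N M)

/-- the predual GKSL generator ℒ_* of the modified AKV model -/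
def Lstar (Γ1m Γ1p Γ2m Γ2p Γ3m γ1m γ1p γ2m γ2p γ3m : ℝ)
    (Z ρ : AKVSpace N M →L[ℂ] AKVSpace N M) : AKVSpace N M →L[ℂ] AKVSpace N M :=
  -Complex.I • (Heff N M γ1m γ1p γ2m γ2p γ3m Z * ρ - ρ * Heff N M γ1m γ1p γ2m γ2p γ3m Z)
    + ∑ k : Fin 5,
        (kraus N M Γ1m Γ1p Γ2m Γ2p Γ3m Z k * ρ * adjoint (kraus N M Γ1m Γ1p Γ2m Γ2p Γ3m Z k)
          - (1 / 2 : ℂ) • (adjoint (kraus N M Γ1m Γ1p Γ2m Γ2p Γ3m Z k) *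
                kraus N M Γ1m Γ1p Γ2m Γ2p Γ3m Z k * ρ
              + ρ * (adjoint (kraus N M Γ1m Γ1p Γ2m Γ2p Γ3m Z k) *
                kraus N M Γ1m Γ1p Γ2m Γ2p Γ3m Z k)))

/-- a state: positive semidefinite with trace one -/
def IsState (ρ : AKVSpace N M →L[ℂ] AKVSpace N M) : Prop :=
  ρ.IsPositive ∧ LinearMap.trace ℂ (AKVSpace N M) ↑ρ = 1

/-- the interaction-free subspace W_D -/
def WD (Z : AKVSpace N M →L[ℂ] AKVSpace N M) : Submodule ℂ (AKVSpace N M) :=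
  (Submodule.span ℂ {ket N M 1, psi N M, psi' N M})ᗮ ⊓
    LinearMap.ker (Z : AKVSpace N M →ₗ[ℂ] AKVSpace N M) ⊓
      LinearMap.ker (adjoint Z : AKVSpace N M →ₗ[ℂ] AKVSpace N M)

/-- the subspace V = {e_0, e_1, ψ, ψ', Zψ, Z⋆ψ'}^⊥ -/
def Vsub (Z : AKVSpace N M →L[ℂ] AKVSpace N M) : Submodule ℂ (AKVSpace N M) :=
  (Submodule.span ℂ
    {ket N M 0, ket N M 1, psi N M, psi' N M, Z (psi N M), adjoint Z (psi' N M)})ᗮ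

/-- Im|Z| ∩ {ψ, Z⋆ψ'}^⊥ -/
def subA (Z : AKVSpace N M →L[ℂ] AKVSpace N M) : Submodule ℂ (AKVSpace N M) :=
  LinearMap.range (absZ N M Z : AKVSpace N M →ₗ[ℂ] AKVSpace N M) ⊓ (Submodule.span ℂ {psi N M, adjoint Z (psi' N M)})ᗮ

/-- ran P₃ ∩ {ψ', Zψ}^⊥ -/
def subB (Z : AKVSpace N M →L[ℂ] AKVSpace N M) : Submodule ℂ (AKVSpace N M) :=
  LinearMap.range (P3 N M : AKVSpace N M →ₗ[ℂ] AKVSpace N M) ⊓ (Submodule.span ℂ {psi' N M, Z (psi N M)})ᗮ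

/-- the orthogonal projection onto a subspace, as an operator on the whole space -/
def projOp (U : Submodule ℂ (AKVSpace N M)) : AKVSpace N M →L[ℂ] AKVSpace N M :=
  U.subtypeL ∘L U.orthogonalProjection

end AKV

/-!
Since `ZZ⋆ = P₃` is a projection, `Z` is a partial isometry: `Z⋆Z` is the projection onto
`Im|Z|`, so `Z⋆Z u = u` there, and `Z`, `Z⋆` are mutually inverse isometries between `Im(Z⋆Z)`
and `Im(ZZ⋆) = ran P₃`. Adjointness, `⟪ψ', Zu⟫ = ⟪Z⋆ψ', u⟫` and `⟪Zψ, Zu⟫ = ⟪ψ, Z⋆Zu⟫ = ⟪ψ, u⟫`,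
carries the orthogonality constraints on one side to those on the other.
-/

section

variable {𝕜 E : Type*} [RCLike 𝕜] [NormedAddCommGroup E] [InnerProductSpace 𝕜 E]

theorem Submodule.mem_orthogonal_span_pair_iff {a b v : E} :
    v ∈ (Submodule.span 𝕜 {a, b})ᗮ ↔ ⟪a, v⟫_𝕜 = 0 ∧ ⟪b, v⟫_𝕜 = 0 := by
  rw [Set.insert_eq, Submodule.span_union, ← Submodule.inf_orthogonal, Submodule.mem_inf,
    Submodule.mem_orthogonal_singleton_iff_inner_right,
    Submodule.mem_orthogonal_singleton_iff_inner_right]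

namespace ContinuousLinearMap

variable [CompleteSpace E]

/-- For `T⋆`, with `a` and `b` swapped, this is `Im(TT⋆) ∩ {b, Ta}ᗮ`. -/
def initialSpaceOrth (T : E →L[𝕜] E) (a b : E) : Submodule 𝕜 E :=
  LinearMap.range ((adjoint T * T : E →L[𝕜] E) : E →ₗ[𝕜] E) ⊓ (Submodule.span 𝕜 {a, adjoint T b})ᗮ

variable {T : E →L[𝕜] E} {a b u : E}

theorem adjoint_apply_apply_of_mem_initialSpaceOrth (hT : IsIdempotentElem (adjoint T * T))
    (hu : u ∈ initialSpaceOrth T a b) : adjoint T (T u) = u :=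
  (LinearMap.IsIdempotentElem.mem_range_iff hT.toLinearMap).1 hu.1

theorem inner_apply_apply_of_mem_initialSpaceOrth (hT : IsIdempotentElem (adjoint T * T))
    (hu : u ∈ initialSpaceOrth T a b) (v : E) : ⟪T v, T u⟫_𝕜 = ⟪v, u⟫_𝕜 := by
  rw [← adjoint_inner_right, adjoint_apply_apply_of_mem_initialSpaceOrth hT hu]

theorem apply_mem_initialSpaceOrth_adjoint (hT : IsIdempotentElem (adjoint T * T))
    (hu : u ∈ initialSpaceOrth T a b) : T u ∈ initialSpaceOrth (adjoint T) b a := by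
  have hTu := adjoint_apply_apply_of_mem_initialSpaceOrth hT hu
  obtain ⟨ha, hb⟩ := Submodule.mem_orthogonal_span_pair_iff.1 hu.2
  refine Submodule.mem_inf.2 ⟨⟨T u, by simp [hTu]⟩, ?_⟩
  rw [adjoint_adjoint, Submodule.mem_orthogonal_span_pair_iff, ← adjoint_inner_left, hb,
    ← adjoint_inner_right, hTu, ha]
  exact ⟨rfl, rfl⟩

theorem adjoint_apply_mem_initialSpaceOrth (hT : IsIdempotentElem (T * adjoint T))
    (hu : u ∈ initialSpaceOrth (adjoint T) b a) : adjoint T u ∈ initialSpaceOrth T a b := by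
  simpa only [adjoint_adjoint] using
    apply_mem_initialSpaceOrth_adjoint (T := adjoint T) (by rwa [adjoint_adjoint]) hu

def initialSpaceOrthEquiv (hT : IsIdempotentElem (adjoint T * T))
    (hT' : IsIdempotentElem (T * adjoint T)) :
    initialSpaceOrth T a b ≃ₗ[𝕜] initialSpaceOrth (adjoint T) b a :=
  .ofLinearMap ((T : E →ₗ[𝕜] E).restrict fun _ => apply_mem_initialSpaceOrth_adjoint hT)
    ((adjoint T : E →ₗ[𝕜] E).restrict fun _ => adjoint_apply_mem_initialSpaceOrth hT')
    (LinearMap.ext fun v => Subtype.ext <| show T (adjoint T v) = v by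
      simpa only [adjoint_adjoint] using adjoint_apply_apply_of_mem_initialSpaceOrth
        (T := adjoint T) (by rwa [adjoint_adjoint]) v.2)
    (LinearMap.ext fun u => Subtype.ext <| adjoint_apply_apply_of_mem_initialSpaceOrth hT u.2)

end ContinuousLinearMap

end

namespace AKV

section

variable (N M : ℕ)

theorem ketbra_mul_ketbra (u v w x : AKVSpace N M) :
    ketbra N M u v * ketbra N M w x = ⟪v, w⟫_ℂ • ketbra N M u x := by
  ext1 y
  simp [ketbra, smul_smul, mul_comm]

theorem ketbra_ket_mul_ketbra_ket (i j k l : Fin (N + M + 1)) :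
    ketbra N M (ket N M i) (ket N M j) * ketbra N M (ket N M k) (ket N M l) =
      if j = k then ketbra N M (ket N M i) (ket N M l) else 0 := by
  rw [ketbra_mul_ketbra]
  split_ifs with h
  · simp [h, ket]
  · rw [show ⟪ket N M j, ket N M k⟫_ℂ = 0 by simp [ket, EuclideanSpace.inner_single_left, h]]
    exact zero_smul ℂ (ketbra N M (ket N M i) (ket N M l))

theorem isIdempotentElem_P3 : IsIdempotentElem (P3 N M) := by
  rw [IsIdempotentElem, P3, Finset.sum_mul_sum]
  simp only [ketbra_ket_mul_ketbra_ket, Finset.sum_ite_eq]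
  exact Finset.sum_congr rfl fun i hi => if_pos hi

end

theorem Z_unitary_between_subspaces_general
    (N M : ℕ) (hM1 : 1 ≤ M)
    (Z : AKVSpace N M →L[ℂ] AKVSpace N M) (hZ : IsAKVZ N M hM1 Z) :
    (∀ u ∈ subA N M Z, Z u ∈ subB N M Z) ∧
    (∀ v ∈ subB N M Z, ContinuousLinearMap.adjoint Z v ∈ subA N M Z) ∧
    (∀ u ∈ subA N M Z, ContinuousLinearMap.adjoint Z (Z u) = u) ∧
    (∀ v ∈ subB N M Z, Z (ContinuousLinearMap.adjoint Z v) = v) ∧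
    (∀ u ∈ subA N M Z, ∀ v ∈ subA N M Z, ⟪Z u, Z v⟫_ℂ = ⟪u, v⟫_ℂ) ∧
    (∀ u ∈ subB N M Z, ∀ v ∈ subB N M Z,
      ⟪ContinuousLinearMap.adjoint Z u, ContinuousLinearMap.adjoint Z v⟫_ℂ = ⟪u, v⟫_ℂ) ∧
    Module.finrank ℂ (subA N M Z) = Module.finrank ℂ (subB N M Z) := by
  obtain ⟨-, hZZ, -, -⟩ := hZ
  have hP : IsIdempotentElem (Z * adjoint Z) := hZZ ▸ isIdempotentElem_P3 N M
  have hQ : IsIdempotentElem (adjoint Z * Z) :=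
    isIdempotentElem_star_mul_self_iff_isIdempotentElem_self_mul_star.2 hP
  have hP' : IsIdempotentElem (adjoint (adjoint Z) * adjoint Z) := by rwa [adjoint_adjoint]
  have hA : subA N M Z = initialSpaceOrth Z (psi N M) (psi' N M) := rfl
  have hB : subB N M Z = initialSpaceOrth (adjoint Z) (psi' N M) (psi N M) := by
    rw [initialSpaceOrth, adjoint_adjoint, hZZ]
    rfl
  rw [hA, hB]
  refine ⟨fun u hu => apply_mem_initialSpaceOrth_adjoint hQ hu,
    fun v hv => adjoint_apply_mem_initialSpaceOrth hP hv,
    fun u hu => adjoint_apply_apply_of_mem_initialSpaceOrth hQ hu,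
    fun v hv => by
      simpa only [adjoint_adjoint] using adjoint_apply_apply_of_mem_initialSpaceOrth hP' hv,
    fun u _ v hv => inner_apply_apply_of_mem_initialSpaceOrth hQ hv u,
    fun u _ v hv => inner_apply_apply_of_mem_initialSpaceOrth hP' hv u,
    (initialSpaceOrthEquiv hQ hP).finrank_eq⟩

/-- In the modified AKV model, `Z` maps `Im|Z| ∩ {ψ, Z⋆ψ'}^⊥` into `ran P₃ ∩ {ψ', Zψ}^⊥`,
`Z⋆` maps `ran P₃ ∩ {ψ', Zψ}^⊥` into `Im|Z| ∩ {ψ, Z⋆ψ'}^⊥`, these restrictions are mutually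
inverse and preserve inner products (hence are unitaries between the two subspaces), so the two
subspaces have the same dimension. -/
theorem Z_unitary_between_subspaces
    (N M : ℕ) (hN : 3 ≤ N) (hM1 : 1 ≤ M) (hM2 : M ≤ N - 1)
    (Z : AKVSpace N M →L[ℂ] AKVSpace N M) (hZ : IsAKVZ N M hM1 Z) :
    (∀ u ∈ subA N M Z, Z u ∈ subB N M Z) ∧
    (∀ v ∈ subB N M Z, ContinuousLinearMap.adjoint Z v ∈ subA N M Z) ∧
    (∀ u ∈ subA N M Z, ContinuousLinearMap.adjoint Z (Z u) = u) ∧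
    (∀ v ∈ subB N M Z, Z (ContinuousLinearMap.adjoint Z v) = v) ∧
    (∀ u ∈ subA N M Z, ∀ v ∈ subA N M Z, ⟪Z u, Z v⟫_ℂ = ⟪u, v⟫_ℂ) ∧
    (∀ u ∈ subB N M Z, ∀ v ∈ subB N M Z,
      ⟪ContinuousLinearMap.adjoint Z u, ContinuousLinearMap.adjoint Z v⟫_ℂ = ⟪u, v⟫_ℂ) ∧
    Module.finrank ℂ (subA N M Z) = Module.finrank ℂ (subB N M Z) :=
  Z_unitary_between_subspaces_general N M hM1 Z hZ

end AKV
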